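/- arXiv:1705.01301 — 2 statements merged into one kernel-verified Lean document; each statement's English description precedes it below -/
import Mathlib

section
/- Let D be an integral domain that is not a field. Then the Zariski space Zar(D[X]) of the polynomial ring D[X] is not a Noetherian topological space. -/
/-!
Take a nonzero `d` in a nonzero prime `p` of `D` and a valuation ring `B` of `K(X)` dominating
`D[X]` localized at `p D[X]`; its valuation `v` has `v d < 1` and `v X = 1`. Pulling `B` back
along the substitutions `X ↦ dⁿ X` gives points `Vₙ` of `Zar(D[X])` with `d ^ k / X ∈ Vₙ` exactly
when `n ≤ k`. So the opens `{V | d ^ k / X ∈ V}` cover `{Vₙ}` without a finite subcover, whereas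
every subset of a Noetherian space is compact.
-/

/-- The Zariski topology on the set of valuation subrings of a field `K`. -/
instance zariskiTopology (K : Type*) [Field K] : TopologicalSpace (ValuationSubring K) :=
  TopologicalSpace.generateFrom {U | ∃ x : K, U = {V : ValuationSubring K | x ∈ V}}

/-- The Zariski space `Zar(D)`: valuation subrings of `K` containing the image of `D`. -/
def zarSet (D K : Type*) [CommRing D] [Field K] [Algebra D K] : Set (ValuationSubring K) :=
  {V | ∀ d : D, algebraMap D K d ∈ V}

open Polynomial

theorem TopologicalSpace.not_noetherianSpace_of_mem_iff_le {X : Type*} [TopologicalSpace X]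
    (p : ℕ → X) (U : ℕ → Set X) (hU : ∀ k, IsOpen (U k)) (hpU : ∀ n k, p n ∈ U k ↔ n ≤ k) :
    ¬ NoetherianSpace X := by
  intro hX
  obtain ⟨t, ht⟩ := (NoetherianSpace.isCompact (Set.range p)).elim_finite_subcover U hU
    (Set.range_subset_iff.mpr fun n => Set.mem_iUnion.mpr ⟨n, (hpU n n).mpr le_rfl⟩)
  obtain ⟨k, hkt, hk⟩ := Set.mem_iUnion₂.mp (ht (Set.mem_range_self (t.sup id + 1)))
  have hk_le : k ≤ t.sup id := Finset.le_sup (f := id) hkt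
  have hk_ge : t.sup id + 1 ≤ k := (hpU _ k).mp hk
  omega

theorem isOpen_setOf_mem_valuationSubring {K : Type*} [Field K] (x : K) :
    IsOpen {V : ValuationSubring K | x ∈ V} :=
  TopologicalSpace.isOpen_generateFrom_of_mem ⟨x, rfl⟩

theorem exists_valuationSubring_valuation_lt_one_iff {K : Type*} [Field K] (S : Subring K)
    (P : Ideal S) [P.IsPrime] :
    ∃ B : ValuationSubring K, S ≤ B.toSubring ∧
      ∀ a : S, B.valuation a < 1 ↔ a ∈ P := by
  set R := (LocalSubring.ofPrime S P).toSubring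
  obtain ⟨B, hRB, hloc⟩ := (LocalSubring.ofPrime S P).exists_le_valuationSubring
  have hS : S ≤ B.toSubring := (LocalSubring.le_ofPrime S P).trans hRB
  refine ⟨B, hS, fun a => ?_⟩
  have hunit : IsUnit (algebraMap S R a) ↔ IsUnit (⟨a, hS a.2⟩ : B) :=
    ⟨fun h => h.map (Subring.inclusion hRB), fun h => IsUnit.of_map (Subring.inclusion hRB) _ h⟩
  rw [← B.valuation_lt_one_iff ⟨a, hS a.2⟩, IsLocalRing.mem_maximalIdeal, mem_nonunits_iff,
    ← hunit, IsLocalization.AtPrime.isUnit_to_map_iff R P, Ideal.mem_primeCompl_iff, not_not]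

theorem exists_valuationSubring_valuation_algebraMap_lt_one_iff {A K : Type*} [CommRing A]
    [Field K] [Algebra A K] (hinj : Function.Injective (algebraMap A K)) (P : Ideal A)
    [P.IsPrime] :
    ∃ B : ValuationSubring K, B ∈ zarSet A K ∧
      ∀ a, B.valuation (algebraMap A K a) < 1 ↔ a ∈ P := by
  let e : A ≃+* (algebraMap A K).range := RingEquiv.ofBijective (algebraMap A K).rangeRestrict
    ⟨fun a b h => hinj (congrArg Subtype.val h), (algebraMap A K).rangeRestrict_surjective⟩
  obtain ⟨B, hSB, hB⟩ := exists_valuationSubring_valuation_lt_one_iff _ (P.map e)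
  exact ⟨B, fun a => hSB (e a).2, fun a => (hB (e a)).trans Ideal.apply_mem_of_equiv_iff⟩

theorem Polynomial.compRingHom_C_mul_X_injective {R : Type*} [CommRing R] [IsDomain R] {a : R}
    (ha : a ≠ 0) : Function.Injective (compRingHom (C a * X)) := by
  refine (injective_iff_map_eq_zero _).mpr fun p hp => ?_
  rw [coe_compRingHom_apply, comp_eq_zero_iff] at hp
  refine hp.resolve_right fun ⟨_, h⟩ => ha ?_
  simpa using congrArg (coeff · 1) h

section rescaleX

variable {R : Type*} [CommRing R] [IsDomain R] (K : Type*) [Field K] [Algebra R[X] K]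
  [IsFractionRing R[X] K]

noncomputable def rescaleX {a : R} (ha : a ≠ 0) : K →+* K :=
  IsFractionRing.lift (g := (algebraMap R[X] K).comp (compRingHom (C a * X)))
    ((IsFractionRing.injective R[X] K).comp (compRingHom_C_mul_X_injective ha))

theorem rescaleX_algebraMap {a : R} (ha : a ≠ 0) (p : R[X]) :
    rescaleX K ha (algebraMap R[X] K p) = algebraMap R[X] K (p.comp (C a * X)) :=
  IsFractionRing.lift_algebraMap _ p

variable {K}

theorem comap_rescaleX_mem_zarSet {B : ValuationSubring K} (hB : B ∈ zarSet R[X] K) {a : R}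
    (ha : a ≠ 0) : B.comap (rescaleX K ha) ∈ zarSet R[X] K := fun p => by
  rw [ValuationSubring.mem_comap, rescaleX_algebraMap]
  exact hB _

theorem algebraMap_C_pow_div_X_mem_comap_rescaleX_iff {B : ValuationSubring K} {d : R}
    (hd : d ≠ 0) (hdB : B.valuation (algebraMap R[X] K (C d)) < 1)
    (hXB : B.valuation (algebraMap R[X] K X) = 1) (n k : ℕ) :
    algebraMap R[X] K (C d) ^ k / algebraMap R[X] K X ∈
      B.comap (rescaleX K (pow_ne_zero n hd)) ↔ n ≤ k := by
  have hd0 : 0 < B.valuation (algebraMap R[X] K (C d)) := by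
    refine zero_lt_iff.mpr ((Valuation.ne_zero_iff _).mpr ?_)
    exact (map_ne_zero_iff _ (IsFractionRing.injective R[X] K)).mpr (C_ne_zero.mpr hd)
  rw [ValuationSubring.mem_comap, ← ValuationSubring.valuation_le_one_iff, map_div₀, map_pow,
    rescaleX_algebraMap, rescaleX_algebraMap, C_comp, X_comp, C_pow, map_mul, map_pow,
    map_div₀, map_mul, map_pow, map_pow, hXB, mul_one, div_le_one₀ (pow_pos hd0 n),
    pow_le_pow_iff_right_of_lt_one₀ hd0 hdB]

end rescaleX

theorem stmt11 (D : Type*) [CommRing D] [IsDomain D] (hD : ¬ IsField D) :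
    ¬ TopologicalSpace.NoetherianSpace
        (zarSet (Polynomial D) (FractionRing (Polynomial D))) := by
  set L := FractionRing D[X]
  obtain ⟨p, hp0, hp⟩ := Ring.not_isField_iff_exists_prime.mp hD
  obtain ⟨d, hdp, hd0⟩ := Submodule.exists_mem_ne_zero_of_ne_bot hp0
  obtain ⟨B, hB, hBp⟩ := exists_valuationSubring_valuation_algebraMap_lt_one_iff
    (IsFractionRing.injective D[X] L) (p.map C)
  have hdB : B.valuation (algebraMap D[X] L (C d)) < 1 :=
    (hBp _).mpr (Ideal.mem_map_of_mem C hdp)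
  have hXp : X ∉ p.map (C : D →+* D[X]) := fun h =>
    hp.ne_top ((Ideal.eq_top_iff_one p).mpr (by simpa using Ideal.mem_map_C_iff.mp h 1))
  have hXB : B.valuation (algebraMap D[X] L X) = 1 :=
    ((B.valuation_le_one_iff _).mpr (hB X)).eq_of_not_lt ((hBp X).not.mpr hXp)
  exact TopologicalSpace.not_noetherianSpace_of_mem_iff_le
    (fun n => ⟨_, comap_rescaleX_mem_zarSet hB (pow_ne_zero n hd0)⟩)
    (fun k => Subtype.val ⁻¹' {V | algebraMap D[X] L (C d) ^ k / algebraMap D[X] L X ∈ V})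
    (fun k => (isOpen_setOf_mem_valuationSubring _).preimage continuous_subtype_val)
    (algebraMap_C_pow_div_X_mem_comap_rescaleX_iff hd0 hdB hXB)
end

section
/- Let D be an integral domain with fraction field K and let X be a subset of Over(D) containing every finitely generated D-subalgebra of K. If X, with the subspace Zariski topology, is a spectral space, then X = Over(D). -/
/-- The Zariski topology on the set of subrings of a field `K`: subbasic open sets are
the sets of subrings containing a given element of `K`. -/
instance overTopology (K : Type*) [Field K] : TopologicalSpace (Subring K) :=
  TopologicalSpace.generateFrom {U | ∃ x : K, U = {S : Subring K | x ∈ S}}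

/-- The space `Over(D)` of overrings of `D`: subrings of `K` containing the image of `D`. -/
def overSet (D K : Type*) [CommRing D] [Field K] [Algebra D K] : Set (Subring K) :=
  {S | ∀ d : D, algebraMap D K d ∈ S}

/-- The constructible (patch) topology associated to a topology: the coarsest topology in
which the open and compact subsets of the original topology are clopen. -/
def patchTopology (X : Type*) [TopologicalSpace X] : TopologicalSpace X :=
  TopologicalSpace.generateFrom
    ({U | IsOpen U ∧ IsCompact U} ∪ {U | IsOpen Uᶜ ∧ IsCompact Uᶜ})

/-!
The sets `{S ∈ X | x ∈ S}` are open in `X`, and compact because `D[x] ∈ X` is their least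
element while open sets of subrings are upward closed. For an overring `T`, these sets for
`x ∈ T` together with their complements for `x ∉ T` have the finite intersection property,
witnessed by `D[u ∩ T]` for finite `u`. A spectral space is compact in its constructible
topology, in which all of these sets are closed, so some `S ∈ X` lies in all of them; that
is, `S = T`.
-/

theorem SpectralSpace.nonempty_iInter_of_mem_constructibleTopologySubbasis {Y ι : Type*}
    [TopologicalSpace Y] [SpectralSpace Y] (t : ι → Set Y)
    (ht : ∀ i, t i ∈ constructibleTopologySubbasis Y)
    (hfin : ∀ u : Finset ι, (⋂ i ∈ u, t i).Nonempty) : (⋂ i, t i).Nonempty := by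
  have hclosed : ∀ i, IsClosed (WithTopology.ofTopology ⁻¹' t i :
      Set (WithConstructibleTopology Y)) := fun i =>
    isOpen_compl_iff.mp <| WithConstructibleTopology.isOpen_iff.mpr <|
      TopologicalSpace.isOpen_generateFrom_of_mem <|
        compl_mem_constructibleTopologySubbasis_iff.mpr (ht i)
  obtain ⟨x, -, hx⟩ := isCompact_univ.inter_iInter_nonempty _ hclosed fun u => by
    obtain ⟨y, hy⟩ := hfin u
    exact ⟨WithTopology.toTopology _ y, trivial, by simpa using hy⟩
  exact ⟨x.ofTopology, by simpa using hx⟩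

theorem Homeomorph.spectralSpace {X Y : Type*} [TopologicalSpace X] [TopologicalSpace Y]
    [SpectralSpace Y] (e : X ≃ₜ Y) : SpectralSpace X :=
  haveI := e.symm.compactSpace
  e.isOpenEmbedding.spectralSpace

theorem isCompact_of_forall_specializes {X : Type*} [TopologicalSpace X] {s : Set X} {m : X}
    (hm : m ∈ s) (h : ∀ y ∈ s, y ⤳ m) : IsCompact s := by
  refine fun f _ hf => ⟨m, hm, ClusterPt.of_le_nhds fun U hU => hf ?_⟩
  obtain ⟨V, hVU, hV, hmV⟩ := mem_nhds_iff.mp hU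
  exact fun y hy => hVU ((h y hy).mem_open hV hmV)

namespace Subring

variable {K : Type*} [Field K]

theorem isOpen_setOf_mem (x : K) : IsOpen {S : Subring K | x ∈ S} :=
  TopologicalSpace.isOpen_generateFrom_of_mem ⟨x, rfl⟩

theorem isUpperSet_of_isOpen {U : Set (Subring K)} (hU : IsOpen U) : IsUpperSet U := by
  induction hU with
  | basic V hV =>
    obtain ⟨x, rfl⟩ := hV
    exact fun S T hST hS => hST hS
  | univ => exact isUpperSet_univ
  | inter V W _ _ hV hW => exact hV.inter hW
  | sUnion 𝒮 _ h𝒮 => exact isUpperSet_sUnion h𝒮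

theorem specializes_of_le {S T : Subring K} (h : S ≤ T) : T ⤳ S :=
  specializes_iff_forall_open.mpr fun _ hU hS => isUpperSet_of_isOpen hU h hS

end Subring

theorem adjoin_toSubring_le_of_mem_overSet {D K : Type*} [CommRing D] [Field K] [Algebra D K]
    {s : Set K} {S : Subring K} (hS : S ∈ overSet D K) (hs : s ⊆ S) :
    (Algebra.adjoin D s).toSubring ≤ S :=
  Algebra.adjoin_le (S := { S with algebraMap_mem' := hS }) hs

section

variable {D K : Type*} [CommRing D] [Field K] [Algebra D K] {X : Set (Subring K)}

theorem isCompact_setOf_mem (hX : X ⊆ overSet D K) {x : K}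
    (hx : (Algebra.adjoin D {x}).toSubring ∈ X) : IsCompact {S : X | x ∈ (S : Subring K)} := by
  refine isCompact_of_forall_specializes (m := ⟨_, hx⟩) (Algebra.subset_adjoin rfl) fun S hS => ?_
  refine Topology.IsInducing.subtypeVal.specializes_iff.mp (Subring.specializes_of_le ?_)
  exact adjoin_toSubring_le_of_mem_overSet (hX S.2) (Set.singleton_subset_iff.mpr hS)

theorem mem_of_spectralSpace [SpectralSpace X] (hX : X ⊆ overSet D K)
    (hfg : ∀ s : Finset K, (Algebra.adjoin D (s : Set K)).toSubring ∈ X) {T : Subring K}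
    (hT : T ∈ overSet D K) : T ∈ X := by
  classical
  let A : K → Set X := fun x => {S | x ∈ (S : Subring K)}
  let C : K → Set X := fun x => if x ∈ T then A x else (A x)ᶜ
  have hC : ∀ x, C x ∈ constructibleTopologySubbasis X := fun x => by
    have hA : A x ∈ constructibleTopologySubbasis X :=
      .inl ⟨(Subring.isOpen_setOf_mem x).preimage continuous_subtype_val,
        isCompact_setOf_mem hX (by simpa using hfg {x})⟩
    by_cases hxT : x ∈ T <;> simpa [C, hxT] using hA
  have hfin : ∀ u : Finset K, (⋂ x ∈ u, C x).Nonempty := fun u => by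
    have hle : (Algebra.adjoin D ((u.filter (· ∈ T) : Finset K) : Set K)).toSubring ≤ T :=
      adjoin_toSubring_le_of_mem_overSet hT fun x hx => (Finset.mem_filter.mp hx).2
    refine ⟨⟨_, hfg (u.filter (· ∈ T))⟩, Set.mem_iInter₂.mpr fun x hx => ?_⟩
    by_cases hxT : x ∈ T
    · simpa [C, A, hxT] using Algebra.subset_adjoin (by simp [hx, hxT])
    · simpa [C, A, hxT] using fun hxS => hxT (hle hxS)
  obtain ⟨S, hS⟩ := SpectralSpace.nonempty_iInter_of_mem_constructibleTopologySubbasis C hC hfin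
  have hST : (S : Subring K) = T := SetLike.ext fun x => by
    have hSx := Set.mem_iInter.mp hS x
    by_cases hxT : x ∈ T <;> simp_all [C, A]
  exact hST ▸ S.2

end

theorem stmt18_general {D K : Type*} [CommRing D] [Field K] [Algebra D K]
    (X : Set (Subring K)) (hX : X ⊆ overSet D K)
    (hfg : ∀ s : Finset K, (Algebra.adjoin D (s : Set K)).toSubring ∈ X)
    -- `X`, with the subspace Zariski topology, is a spectral space:
    (hsp : ∃ (R : Type _) (_ : CommRing R), Nonempty (X ≃ₜ PrimeSpectrum R)) :
    X = overSet D K := by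
  obtain ⟨R, _, ⟨e⟩⟩ := hsp
  have := e.spectralSpace
  exact hX.antisymm fun T hT => mem_of_spectralSpace hX hfg hT

theorem stmt18 {D K : Type*} [CommRing D] [IsDomain D] [Field K] [Algebra D K]
    [IsFractionRing D K] (X : Set (Subring K)) (hX : X ⊆ overSet D K)
    (hfg : ∀ s : Finset K, (Algebra.adjoin D (s : Set K)).toSubring ∈ X)
    -- `X`, with the subspace Zariski topology, is a spectral space:
    (hsp : ∃ (R : Type _) (_ : CommRing R), Nonempty (X ≃ₜ PrimeSpectrum R)) :
    X = overSet D K :=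
  stmt18_general X hX hfg hsp
end
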